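/- Let A ⊆ ℝ³ be a nonempty compact set and S₁,…,S_k similarity transformations of ℝ³ with ratios s₁,…,s_k such that A = S₁(A) ∪ ⋯ ∪ S_k(A) and s₁² + ⋯ + s_k² < 1. Then for every 2-dimensional affine subspace Π ⊆ ℝ³, the orthogonal projection of A onto Π has 2-dimensional Lebesgue (Hausdorff) measure zero. -/

import Mathlib

/-!
Already `A` itself is `μH[2]`-null: the images of `A` under the `kⁿ` compositions
`S_{w₁} ∘ ⋯ ∘ S_{wₙ}` cover `A`, have diameters at most `(s_{w₁} ⋯ s_{wₙ}) diam A → 0`, and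
the sum of their squared diameters is at most `(∑ sᵢ²)ⁿ (diam A)² → 0`. The orthogonal
projection, being the nearest-point map onto a convex set, is 1-Lipschitz, so it cannot
increase Hausdorff measure.
-/

open MeasureTheory Filter Topology
open scoped RealInnerProductSpace NNReal ENNReal

section NearestPoint

variable {E : Type*} [NormedAddCommGroup E] [InnerProductSpace ℝ E] {K : Set E} {p : E → E}

theorem inner_sub_nearestPoint_nonpos (hK : Convex ℝ K) (hp : ∀ x, p x ∈ K)
    (hproj : ∀ x, ∀ y ∈ K, dist x (p x) ≤ dist x y) (x : E) :
    ∀ w ∈ K, ⟪x - p x, w - p x⟫ ≤ 0 := by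
  have : Nonempty K := ⟨⟨p x, hp x⟩⟩
  refine (norm_eq_iInf_iff_real_inner_le_zero hK (hp x)).mp (le_antisymm ?_ ?_)
  · exact le_ciInf fun w => by simpa only [dist_eq_norm] using hproj x w w.2
  · exact ciInf_le ⟨0, by rintro _ ⟨w, rfl⟩; positivity⟩ (⟨p x, hp x⟩ : K)

theorem lipschitzWith_one_of_nearestPoint (hK : Convex ℝ K) (hp : ∀ x, p x ∈ K)
    (hproj : ∀ x, ∀ y ∈ K, dist x (p x) ≤ dist x y) : LipschitzWith 1 p := by
  refine LipschitzWith.mk_one fun x y => ?_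
  rw [dist_eq_norm, dist_eq_norm]
  have hx := inner_sub_nearestPoint_nonpos hK hp hproj x (p y) (hp y)
  have hy := inner_sub_nearestPoint_nonpos hK hp hproj y (p x) (hp x)
  have key : ⟪p x - p y, x - y⟫ =
      ‖p x - p y‖ ^ 2 - ⟪x - p x, p y - p x⟫ - ⟪y - p y, p x - p y⟫ := by
    rw [← real_inner_self_eq_norm_sq]
    simp only [inner_sub_left, inner_sub_right, real_inner_comm]
    ring
  have hle := real_inner_le_norm (p x - p y) (x - y)
  nlinarith [norm_nonneg (p x - p y), norm_nonneg (x - y)]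

end NearestPoint

theorem tendsto_pow_mul_nhds_zero_of_lt_one {a b : ℝ≥0∞} (ha : a < 1) (hb : b ≠ ∞) :
    Tendsto (fun n : ℕ => a ^ n * b) atTop (𝓝 0) := by
  simpa using ENNReal.Tendsto.mul_const (ENNReal.tendsto_pow_atTop_nhds_zero_of_lt_one ha)
    (.inr hb)

section SelfSimilar

variable {ι X : Type*} (S : ι → X → X)

def wordMap : (n : ℕ) → (Fin n → ι) → X → X
  | 0, _ => id
  | n + 1, w => S (w 0) ∘ wordMap n (Fin.tail w)

variable {S}

theorem lipschitzWith_wordMap [PseudoEMetricSpace X] {σ : ι → ℝ≥0}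
    (hS : ∀ i, LipschitzWith (σ i) (S i)) :
    ∀ n (w : Fin n → ι), LipschitzWith (∏ j, σ (w j)) (wordMap S n w)
  | 0, _ => by simpa [wordMap] using LipschitzWith.id
  | n + 1, w => by
    rw [Fin.prod_univ_succ]
    exact (hS (w 0)).comp (lipschitzWith_wordMap hS n (Fin.tail w))

theorem subset_iUnion_wordMap_image {A : Set X} (hA : A ⊆ ⋃ i, S i '' A) :
    ∀ n, A ⊆ ⋃ w : Fin n → ι, wordMap S n w '' A
  | 0 => fun x hx => Set.mem_iUnion.2 ⟨Fin.elim0, x, hx, rfl⟩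
  | n + 1 => by
    intro x hx
    obtain ⟨i, a, ha, rfl⟩ := Set.mem_iUnion.1 (hA hx)
    obtain ⟨w, b, hb, rfl⟩ := Set.mem_iUnion.1 (subset_iUnion_wordMap_image hA n ha)
    exact Set.mem_iUnion.2 ⟨Fin.cons i w, b, hb, by simp [wordMap, Fin.tail_cons]⟩

theorem sum_prod_rpow_eq_pow [Fintype ι] (σ : ι → ℝ≥0) (d : ℝ) (n : ℕ) :
    ∑ w : Fin n → ι, ((∏ j, σ (w j) : ℝ≥0) : ℝ≥0∞) ^ d = (∑ i, (σ i : ℝ≥0∞) ^ d) ^ n := by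
  simp_rw [ENNReal.ofNNReal_finsetProd,
    ← ENNReal.prod_rpow_of_ne_top (fun _ _ => ENNReal.coe_ne_top)]
  rw [← Fintype.prod_sum fun (_ : Fin n) i => (σ i : ℝ≥0∞) ^ d, Finset.prod_const,
    Finset.card_univ, Fintype.card_fin]

theorem hausdorffMeasure_eq_zero_of_subset_iUnion_image [Fintype ι] [EMetricSpace X]
    [MeasurableSpace X] [BorelSpace X] {σ : ι → ℝ≥0} (hS : ∀ i, LipschitzWith (σ i) (S i))
    {d : ℝ} (hd : 0 < d) (hσ : ∑ i, (σ i : ℝ≥0∞) ^ d < 1) {A : Set X}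
    (hA : Metric.ediam A ≠ ∞) (hself : A ⊆ ⋃ i, S i '' A) : μH[d] A = 0 := by
  set D := Metric.ediam A
  set c := Finset.univ.sup σ
  have hc : (c : ℝ≥0∞) < 1 := by
    refine ENNReal.coe_lt_one_iff.2 (Finset.sup_lt_iff zero_lt_one |>.2 fun i _ => ?_)
    have : (σ i : ℝ≥0∞) ^ d < 1 :=
      (Finset.single_le_sum (fun j _ => zero_le) (Finset.mem_univ i)).trans_lt hσ
    exact_mod_cast not_le.1 fun h => (ENNReal.one_le_rpow h hd).not_gt this
  have hdiam : ∀ n (w : Fin n → ι),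
      Metric.ediam (wordMap S n w '' A) ≤ ((∏ j, σ (w j) : ℝ≥0) : ℝ≥0∞) * D :=
    fun n w => (lipschitzWith_wordMap hS n w).ediam_image_le A
  have hcover := Measure.hausdorffMeasure_le_liminf_sum d A (fun n => (c : ℝ≥0∞) ^ n * D)
    (tendsto_pow_mul_nhds_zero_of_lt_one hc hA)
    (fun n w => wordMap S n w '' A)
    (.of_forall fun n w => (hdiam n w).trans <| by
      gcongr
      have : ∏ j, σ (w j) ≤ c ^ n := by
        simpa using Finset.prod_le_pow_card Finset.univ (σ ∘ w) c fun j _ =>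
          Finset.le_sup (Finset.mem_univ (w j))
      exact_mod_cast this)
    (.of_forall (subset_iUnion_wordMap_image hself))
  have hsum : ∀ n, ∑ w : Fin n → ι, Metric.ediam (wordMap S n w '' A) ^ d ≤
      (∑ i, (σ i : ℝ≥0∞) ^ d) ^ n * D ^ d := fun n => calc
    _ ≤ ∑ w : Fin n → ι, ((∏ j, σ (w j) : ℝ≥0) : ℝ≥0∞) ^ d * D ^ d :=
      Finset.sum_le_sum fun w _ => by
        rw [← ENNReal.mul_rpow_of_nonneg _ _ hd.le]
        gcongr
        exact hdiam n w
    _ = _ := by rw [← Finset.sum_mul, sum_prod_rpow_eq_pow]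
  have hlim : Tendsto (fun n => (∑ i, (σ i : ℝ≥0∞) ^ d) ^ n * D ^ d) atTop (𝓝 0) :=
    tendsto_pow_mul_nhds_zero_of_lt_one hσ (ENNReal.rpow_ne_top_of_nonneg hd.le hA)
  exact le_antisymm (hcover.trans <| (liminf_le_liminf (.of_forall hsum)).trans
    hlim.liminf_eq.le) zero_le

end SelfSimilar

theorem stmt1_general (k : ℕ)
    (S : Fin k → EuclideanSpace ℝ (Fin 3) → EuclideanSpace ℝ (Fin 3))
    (s : Fin k → ℝ) (hs : ∀ i, 0 < s i)
    (hsim : ∀ i x y, dist (S i x) (S i y) = s i * dist x y)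
    (hsum : ∑ i, (s i) ^ 2 < 1)
    (A : Set (EuclideanSpace ℝ (Fin 3))) (hcomp : IsCompact A)
    (hself : A = ⋃ i, S i '' A)
    (P : AffineSubspace ℝ (EuclideanSpace ℝ (Fin 3)))
    (p : EuclideanSpace ℝ (Fin 3) → EuclideanSpace ℝ (Fin 3))
    (hp : ∀ x, p x ∈ P)
    (hproj : ∀ x, ∀ y ∈ P, dist x (p x) ≤ dist x y) :
    μH[2] (p '' A) = 0 := by
  set σ : Fin k → ℝ≥0 := fun i => ⟨s i, (hs i).le⟩
  have hS : ∀ i, LipschitzWith (σ i) (S i) := fun i =>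
    LipschitzWith.of_dist_le_mul fun x y => (hsim i x y).le
  have hσ : ∑ i, (σ i : ℝ≥0∞) ^ (2 : ℝ) < 1 := by
    simp_rw [ENNReal.rpow_two, ← ENNReal.coe_pow, ← ENNReal.ofNNReal_finsetSum,
      ENNReal.coe_lt_one_iff, ← NNReal.coe_lt_coe]
    push_cast [σ]
    exact hsum
  have hA : μH[2] A = 0 := hausdorffMeasure_eq_zero_of_subset_iUnion_image hS two_pos hσ
    hcomp.isBounded.ediam_ne_top hself.subset
  have hp_lip : LipschitzWith 1 p := lipschitzWith_one_of_nearestPoint P.convex hp hproj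
  exact nonpos_iff_eq_zero.1 <| (hp_lip.hausdorffMeasure_image_le zero_le_two A).trans_eq
    (by simp [hA])

/-- If a nonempty compact `A ⊆ ℝ³` is self-similar under similarities with
`∑ sᵢ² < 1`, then the orthogonal projection of `A` onto every 2-dimensional affine
subspace `P` has 2-dimensional Hausdorff (Lebesgue) measure zero.  The orthogonal
projection onto `P` is characterized as the nearest-point map into `P`. -/
theorem stmt1 (k : ℕ)
    (S : Fin k → EuclideanSpace ℝ (Fin 3) → EuclideanSpace ℝ (Fin 3))
    (s : Fin k → ℝ) (hs : ∀ i, 0 < s i)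
    (hsim : ∀ i x y, dist (S i x) (S i y) = s i * dist x y)
    (hsum : ∑ i, (s i) ^ 2 < 1)
    (A : Set (EuclideanSpace ℝ (Fin 3))) (hne : A.Nonempty) (hcomp : IsCompact A)
    (hself : A = ⋃ i, S i '' A)
    (P : AffineSubspace ℝ (EuclideanSpace ℝ (Fin 3)))
    (hPne : (P : Set (EuclideanSpace ℝ (Fin 3))).Nonempty)
    (hPdim : Module.finrank ℝ P.direction = 2)
    (p : EuclideanSpace ℝ (Fin 3) → EuclideanSpace ℝ (Fin 3))
    (hp : ∀ x, p x ∈ P)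
    (hproj : ∀ x, ∀ y ∈ P, dist x (p x) ≤ dist x y) :
    μH[2] (p '' A) = 0 :=
  stmt1_general k S s hs hsim hsum A hcomp hself P p hp hproj
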